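/- arXiv:math/0411086 — 2 statements merged into one kernel-verified Lean document; each statement's English description precedes it below -/
import Mathlib

section
/- Let D ⊂ ℂⁿ be a bounded domain, Y ⊂ ℂ^m a nonempty open set, and F : Y × D → D a holomorphic map such that for every y ∈ Y the map f_y = F(y,·) : D → D has image with compact closure contained in D. Let τ_F : Y → D assign to y the unique fixed point of f_y. Then for every y₀ ∈ Y, the differential of τ_F at y₀ is given by d(τ_F)_{y₀} = (id − d(f_{y₀})_{τ_F(y₀)})⁻¹ ∘ d_y F_{(y₀, τ_F(y₀))}, where d_y F_{(y₀, τ_F(y₀))} : ℂ^m → ℂⁿ denotes the partial differential of F in the Y-variables at (y₀, τ_F(y₀)), i.e., v ↦ dF_{(y₀, τ_F(y₀))}(v, 0). -/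
/-!
At a fixed point `a` of a holomorphic self-map `u` of a bounded domain `D` with `u '' D`
relatively compact in `D`, the map `z ↦ u z + s • (u z - a)` is still a self-map of `D` for some
`s > 0`. Cauchy estimates bound the derivatives at `a` of its iterates, which are
`(1 + s) ^ k • A ^ k` with `A = du_a`; hence `A ^ k → 0`, `id - A` is invertible and some iterate
of `u` attracts a neighbourhood of `a`. The iterates of `u` are equicontinuous (Cauchy estimates
again), so the basin of `a` is open and closed in the connected set `D`: every orbit converges to
`a`, and `a` is the only fixed point of `u`.

Holomorphic maps are strictly differentiable, so the implicit function theorem applied to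
`z = F (y, z)` gives a local solution near `y₀` with derivative `(id - A)⁻¹ ∘ d_y F`; by uniqueness
of fixed points this solution is `τ`.
-/

open Metric Set Function Filter Topology Bornology

section Holomorphic

variable {E F : Type*} [NormedAddCommGroup E] [NormedSpace ℂ E]
  [NormedAddCommGroup F] [NormedSpace ℂ F]

/-- On `ball q (ρ / 2) ⊆ ball x ρ` the map `f - fderiv ℂ f x` oscillates by `O(ε ρ)`, so the
Cauchy estimate bounds `fderiv ℂ f q - fderiv ℂ f x` by `O(ε)`. -/
theorem DifferentiableOn.continuousAt_fderiv {f : E → F} {s : Set E}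
    (hf : DifferentiableOn ℂ f s) (hs : IsOpen s) {x : E} (hx : x ∈ s) :
    ContinuousAt (fderiv ℂ f) x := by
  rw [Metric.continuousAt_iff]
  intro ε hε
  set L := fderiv ℂ f x
  have hfx : HasFDerivAt f L x := (hf.differentiableAt (hs.mem_nhds hx)).hasFDerivAt
  obtain ⟨ρ, hρ, hρs⟩ := Metric.eventually_nhds_iff_ball.1
    (Filter.Eventually.and (hs.mem_nhds hx) (hfx.isLittleO.def (by positivity : 0 < ε / 4)))
  refine ⟨ρ / 2, by positivity, fun q hq => ?_⟩
  have hball : ball q (ρ / 2) ⊆ ball x ρ := fun w hw => by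
    rw [mem_ball] at hw ⊢
    linarith [dist_triangle w q x]
  have hderiv : ∀ w ∈ ball q (ρ / 2), HasFDerivAt (fun w => f w - L w) (fderiv ℂ f w - L) w :=
    fun w hw => ((hf.differentiableAt (hs.mem_nhds (hρs w (hball hw)).1)).hasFDerivAt.sub
      L.hasFDerivAt)
  have hmaps : MapsTo (fun w => f w - L w) (ball q (ρ / 2))
      (closedBall (f q - L q) (3 * ε / 8 * ρ)) := fun w hw => by
    have hw' := (hρs w (hball hw)).2
    have hq' := (hρs q (hball (mem_ball_self (by positivity)))).2
    have hwx : ‖w - x‖ < ρ := by simpa [dist_eq_norm] using hball hw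
    rw [dist_eq_norm] at hq
    rw [mem_closedBall, dist_eq_norm]
    calc ‖f w - L w - (f q - L q)‖
        = ‖(f w - f x - L (w - x)) - (f q - f x - L (q - x))‖ := by
          simp only [map_sub]; congr 1; abel
      _ ≤ ε / 4 * ‖w - x‖ + ε / 4 * ‖q - x‖ :=
          (norm_sub_le _ _).trans (add_le_add hw' hq')
      _ ≤ 3 * ε / 8 * ρ := by nlinarith
  rw [dist_eq_norm, ← (hderiv q (mem_ball_self (by positivity))).fderiv]
  calc _ ≤ 3 * ε / 8 * ρ / (ρ / 2) :=
        Complex.norm_fderiv_le_div_of_mapsTo_ball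
          (fun w hw => (hderiv w hw).differentiableAt.differentiableWithinAt) hmaps (by positivity)
    _ < ε := by field_simp; linarith

theorem DifferentiableOn.hasStrictFDerivAt {f : E → F} {s : Set E}
    (hf : DifferentiableOn ℂ f s) (hs : IsOpen s) {x : E} (hx : x ∈ s) :
    HasStrictFDerivAt f (fderiv ℂ f x) x :=
  hasStrictFDerivAt_of_hasFDerivAt_of_continuousAt
    (eventually_of_mem (hs.mem_nhds hx) fun _ hy =>
      (hf.differentiableAt (hs.mem_nhds hy)).hasFDerivAt)
    (hf.continuousAt_fderiv hs hx)

theorem equicontinuousAt_of_differentiableOn_of_mapsTo_isBounded {ι : Type*}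
    {f : ι → E → F} {D : Set E} {B : Set F} (hD : IsOpen D) (hB : IsBounded B)
    (hf : ∀ i, DifferentiableOn ℂ (f i) D) (hmaps : ∀ i, MapsTo (f i) D B) {z : E}
    (hz : z ∈ D) : EquicontinuousAt f z := by
  obtain ⟨r, hr, hrD⟩ := Metric.isOpen_iff.1 hD z hz
  have hlip : ∀ i, ∀ w ∈ ball z r, dist (f i w) (f i z) ≤ diam B / r * dist w z :=
    fun i w hw => Complex.dist_le_div_mul_dist_of_mapsTo_ball ((hf i).mono hrD)
      (fun x hx => mem_closedBall.2 (dist_le_diam_of_mem hB (hmaps i (hrD hx)) (hmaps i hz)))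
      hw
  have hsmall : Tendsto (fun w => diam B / r * dist w z) (𝓝 z) (𝓝 0) := by
    simpa using (tendsto_const_nhds (x := diam B / r)).mul
      ((tendsto_id (x := 𝓝 z)).dist (tendsto_const_nhds (x := z)))
  rw [Metric.equicontinuousAt_iff_right]
  intro ε hε
  filter_upwards [ball_mem_nhds z hr, hsmall.eventually (gt_mem_nhds hε)] with w hw hwε i
  rw [dist_comm]
  exact (hlip i w hw).trans_lt hwε

end Holomorphic

section Attraction

variable {𝕜 E : Type*} [NontriviallyNormedField 𝕜] [NormedAddCommGroup E]
  [NormedSpace 𝕜 E]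

theorem HasFDerivAt.eventually_tendsto_iterate {g : E → E} {L : E →L[𝕜] E} {a : E}
    (hg : HasFDerivAt g L a) (ha : IsFixedPt g a) (hL : ‖L‖ < 1) :
    ∀ᶠ z in 𝓝 a, Tendsto (fun j => g^[j] z) atTop (𝓝 a) := by
  obtain ⟨c, hLc, hc1⟩ := exists_between hL
  obtain ⟨ρ, hρ, hρg⟩ := Metric.eventually_nhds_iff_ball.1
    (hg.isLittleO.def (sub_pos.2 hLc))
  have hcontr : ∀ z ∈ ball a ρ, ‖g z - a‖ ≤ c * ‖z - a‖ := fun z hz => by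
    have h := hρg z hz
    rw [ha.eq] at h
    calc ‖g z - a‖ = ‖(g z - a - L (z - a)) + L (z - a)‖ := by rw [sub_add_cancel]
      _ ≤ (c - ‖L‖) * ‖z - a‖ + ‖L‖ * ‖z - a‖ := norm_add_le_of_le h (L.le_opNorm _)
      _ = c * ‖z - a‖ := by ring
  have hc0 : 0 ≤ c := (norm_nonneg L).trans hLc.le
  have hiter : ∀ z ∈ ball a ρ, ∀ j, ‖g^[j] z - a‖ ≤ c ^ j * ‖z - a‖ := by
    intro z hz j
    induction j with
    | zero => simp
    | succ j ih =>
      have hj : g^[j] z ∈ ball a ρ := by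
        rw [mem_ball, dist_eq_norm] at hz ⊢
        exact ih.trans_lt
          ((mul_le_of_le_one_left (norm_nonneg _) (pow_le_one₀ hc0 hc1.le)).trans_lt hz)
      rw [iterate_succ_apply', pow_succ', mul_assoc]
      exact (hcontr _ hj).trans (mul_le_mul_of_nonneg_left ih hc0)
  filter_upwards [ball_mem_nhds a hρ] with z hz
  rw [tendsto_iff_norm_sub_tendsto_zero]
  refine squeeze_zero (fun j => norm_nonneg _) (hiter z hz) ?_
  simpa using (tendsto_pow_atTop_nhds_zero_of_lt_one hc0 hc1).mul_const ‖z - a‖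

end Attraction

theorem IsPreconnected.tendsto_iterate_of_equicontinuousAt {X : Type*} [UniformSpace X]
    {D : Set X} (hconn : IsPreconnected D) (hD : IsOpen D) {g : X → X}
    (hg : ∀ z ∈ D, EquicontinuousAt (fun j : ℕ => g^[j]) z) {a : X} (ha : a ∈ D)
    (hattr : ∀ᶠ z in 𝓝 a, Tendsto (fun j => g^[j] z) atTop (𝓝 a)) :
    ∀ z ∈ D, Tendsto (fun j => g^[j] z) atTop (𝓝 a) := by
  set S := {z | Tendsto (fun j => g^[j] z) atTop (𝓝 a)}
  have hopen : IsOpen (D ∩ S) := by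
    refine isOpen_iff_mem_nhds.2 fun z ⟨hzD, hzS⟩ => ?_
    obtain ⟨j₀, hj₀⟩ := (hzS.eventually (eventually_eventually_nhds.2 hattr)).exists
    filter_upwards [hD.mem_nhds hzD, ((hg z hzD).continuousAt j₀).eventually hj₀] with w hwD hw
    refine ⟨hwD, (tendsto_add_atTop_iff_nat j₀).1 ?_⟩
    simpa only [iterate_add_apply] using hw
  have hclosed : closure (D ∩ S) ∩ D ⊆ D ∩ S := fun z ⟨hz, hzD⟩ =>
    ⟨hzD, (hg z hzD).tendsto_of_mem_closure tendsto_const_nhds (fun _ hy => hy.2) hz⟩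
  exact fun z hz => (hconn.subset_of_closure_inter_subset hopen
    ⟨a, ha, ha, hattr.self_of_nhds⟩ hclosed hz).2

theorem isUnit_one_sub_of_tendsto_pow {R : Type*} [NormedRing R] [CompleteSpace R] {x : R}
    (hx : Tendsto (fun k => x ^ k) atTop (𝓝 0)) : IsUnit (1 - x) := by
  obtain ⟨N, hN⟩ := ((tendsto_norm_zero.comp hx).eventually (gt_mem_nhds one_pos)).exists
  have hunit : IsUnit ((1 - x) * ∑ i ∈ Finset.range N, x ^ i) := by
    rw [mul_neg_geom_sum]
    exact (Units.oneSub _ hN).isUnit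
  have hcomm : Commute (1 - x) (∑ i ∈ Finset.range N, x ^ i) :=
    (Commute.one_left _).sub_left (Commute.sum_right _ _ _ fun i _ => Commute.self_pow x i)
  exact (hcomm.isUnit_mul_iff.1 hunit).1

section SelfMap

variable {E : Type*} [NormedAddCommGroup E] [NormedSpace ℂ E] {D : Set E}

theorem exists_norm_pow_fderiv_le (hD : IsOpen D) (hbdd : IsBounded D) {h : E → E}
    (hh : DifferentiableOn ℂ h D) (hmaps : MapsTo h D D) {a : E} (ha : a ∈ D)
    (hfix : IsFixedPt h a) : ∃ C, ∀ k, ‖fderiv ℂ h a ^ k‖ ≤ C := by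
  obtain ⟨r, hr, hrD⟩ := Metric.isOpen_iff.1 hD a ha
  refine ⟨diam D / r, fun k => ?_⟩
  rw [← ((hh.differentiableAt (hD.mem_nhds ha)).hasFDerivAt.iterate hfix k).fderiv]
  refine Complex.norm_fderiv_le_div_of_mapsTo_ball ((hh.iterate hmaps k).mono hrD)
    (fun z hz => mem_closedBall.2 ?_) hr
  exact dist_le_diam_of_mem hbdd ((hmaps.iterate k) (hrD hz)) ((hmaps.iterate k) ha)

/-- Pushing `u` slightly away from `a` keeps it a self-map of `D`, because `u '' D` stays a
positive distance away from the boundary of `D`. -/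
theorem exists_pos_mapsTo_add_smul_sub (hD : IsOpen D) (hbdd : IsBounded D)
    {u : E → E} (hcpt : IsCompact (closure (u '' D))) (hsub : closure (u '' D) ⊆ D) (a : E) :
    ∃ s : ℝ, 0 < s ∧ MapsTo (fun z => u z + (s : ℂ) • (u z - a)) D D := by
  obtain ⟨δ, hδ, hδD⟩ := hcpt.exists_thickening_subset_open hD hsub
  obtain ⟨M, hM, hDM⟩ := hbdd.subset_ball_lt 0 a
  refine ⟨δ / M, by positivity, fun z hz => hδD (mem_thickening_iff.2 ⟨u z,
    subset_closure (mem_image_of_mem u hz), ?_⟩)⟩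
  have huz : ‖u z - a‖ < M := by
    simpa [dist_eq_norm] using hDM (hsub (subset_closure (mem_image_of_mem u hz)))
  rw [dist_eq_norm, add_sub_cancel_left, norm_smul, Complex.norm_real,
    Real.norm_of_nonneg (by positivity)]
  calc δ / M * ‖u z - a‖ < δ / M * M := by gcongr
    _ = δ := div_mul_cancel₀ δ hM.ne'

theorem tendsto_pow_fderiv_of_isCompact_closure_image (hD : IsOpen D)
    (hbdd : IsBounded D) {u : E → E} (hu : DifferentiableOn ℂ u D)
    (hcpt : IsCompact (closure (u '' D))) (hsub : closure (u '' D) ⊆ D) {a : E} (ha : a ∈ D)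
    (hfix : IsFixedPt u a) : Tendsto (fun k => fderiv ℂ u a ^ k) atTop (𝓝 0) := by
  obtain ⟨s, hs, hmaps⟩ := exists_pos_mapsTo_add_smul_sub hD hbdd hcpt hsub a
  have hh : ∀ z ∈ D, HasFDerivAt (fun z => u z + (s : ℂ) • (u z - a))
      ((1 + (s : ℂ)) • fderiv ℂ u z) z := fun z hz => by
    have hu' := (hu.differentiableAt (hD.mem_nhds hz)).hasFDerivAt
    rw [add_smul, one_smul]
    exact hu'.add ((hu'.sub_const a).const_smul (s : ℂ))
  obtain ⟨C, hC⟩ := exists_norm_pow_fderiv_le hD hbdd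
    (fun z hz => (hh z hz).differentiableAt.differentiableWithinAt) hmaps ha
    (by simp [IsFixedPt, hfix.eq])
  rw [(hh a ha).fderiv] at hC
  have hnorm : ‖(1 : ℂ) + s‖ = 1 + s := by
    rw [← Complex.ofReal_one, ← Complex.ofReal_add, Complex.norm_real,
      Real.norm_of_nonneg (by positivity)]
  have hbound : ∀ k, ‖fderiv ℂ u a ^ k‖ ≤ C * (1 / (1 + s)) ^ k := fun k => by
    have := hC k
    rw [smul_pow, norm_smul, norm_pow, hnorm] at this
    rw [div_pow, one_pow, mul_one_div, le_div_iff₀ (by positivity), mul_comm]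
    exact this
  rw [tendsto_zero_iff_norm_tendsto_zero]
  refine squeeze_zero (fun _ => norm_nonneg _) hbound ?_
  simpa using (tendsto_pow_atTop_nhds_zero_of_lt_one (by positivity)
    ((div_lt_one (by positivity)).2 (lt_add_of_pos_right 1 hs))).const_mul C

theorem isInvertible_id_sub_fderiv_of_isCompact_closure_image [CompleteSpace E]
    (hD : IsOpen D) (hbdd : IsBounded D) {u : E → E} (hu : DifferentiableOn ℂ u D)
    (hcpt : IsCompact (closure (u '' D))) (hsub : closure (u '' D) ⊆ D) {a : E} (ha : a ∈ D)
    (hfix : IsFixedPt u a) : (ContinuousLinearMap.id ℂ E - fderiv ℂ u a).IsInvertible := by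
  obtain ⟨w, hw⟩ := isUnit_one_sub_of_tendsto_pow
    (tendsto_pow_fderiv_of_isCompact_closure_image hD hbdd hu hcpt hsub ha hfix)
  exact ⟨ContinuousLinearEquiv.unitsEquiv ℂ E w, hw⟩

theorem eq_of_isFixedPt_of_isCompact_closure_image (hD : IsOpen D)
    (hconn : IsPreconnected D) (hbdd : IsBounded D) {u : E → E} (hu : DifferentiableOn ℂ u D)
    (hcpt : IsCompact (closure (u '' D))) (hsub : closure (u '' D) ⊆ D) {a b : E} (ha : a ∈ D)
    (hb : b ∈ D) (hfa : IsFixedPt u a) (hfb : IsFixedPt u b) : b = a := by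
  have hmaps : MapsTo u D D := fun z hz => hsub (subset_closure (mem_image_of_mem u hz))
  obtain ⟨N, hN⟩ := ((tendsto_norm_zero.comp (tendsto_pow_fderiv_of_isCompact_closure_image
    hD hbdd hu hcpt hsub ha hfa)).eventually (gt_mem_nhds one_pos)).exists
  have hattr := ((hu.differentiableAt (hD.mem_nhds ha)).hasFDerivAt.iterate hfa N
    ).eventually_tendsto_iterate (hfa.iterate N) hN
  have hequi : ∀ z ∈ D, EquicontinuousAt (fun j : ℕ => (u^[N])^[j]) z :=
    fun z hz => equicontinuousAt_of_differentiableOn_of_mapsTo_isBounded hD hbdd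
      (fun j => (hu.iterate hmaps N).iterate (hmaps.iterate N) j)
      (fun j => (hmaps.iterate N).iterate j) hz
  have hlim := hconn.tendsto_iterate_of_equicontinuousAt hD hequi ha hattr b hb
  simpa only [((hfb.iterate N).iterate _).eq, tendsto_const_nhds_iff] using hlim

end SelfMap

section ImplicitFixedPoint

variable {𝕜 E₁ E₂ : Type*} [NontriviallyNormedField 𝕜]
  [NormedAddCommGroup E₁] [NormedSpace 𝕜 E₁] [CompleteSpace E₁]
  [NormedAddCommGroup E₂] [NormedSpace 𝕜 E₂] [CompleteSpace E₂]

open ContinuousLinearMap (inl inr snd) in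
theorem HasStrictFDerivAt.hasFDerivAt_of_eventually_isFixedPt {F : E₁ × E₂ → E₂}
    {F' : E₁ × E₂ →L[𝕜] E₂} {τ : E₁ → E₂} {y₀ : E₁} (hF : HasStrictFDerivAt F F' (y₀, τ y₀))
    (hfix : F (y₀, τ y₀) = τ y₀)
    (hinv : (ContinuousLinearMap.id 𝕜 E₂ - F' ∘L inr 𝕜 E₁ E₂).IsInvertible)
    (huniq : ∀ᶠ p in 𝓝 (y₀, τ y₀), F p = p.2 → τ p.1 = p.2) :
    HasFDerivAt τ
      ((ContinuousLinearMap.id 𝕜 E₂ - F' ∘L inr 𝕜 E₁ E₂).inverse ∘L F' ∘L inl 𝕜 E₁ E₂) y₀ := by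
  have hΦ : HasStrictFDerivAt (fun p => p.2 - F p) (snd 𝕜 E₁ E₂ - F') (y₀, τ y₀) :=
    hasStrictFDerivAt_snd.sub hF
  have hinr : (snd 𝕜 E₁ E₂ - F') ∘L inr 𝕜 E₁ E₂ =
      ContinuousLinearMap.id 𝕜 E₂ - F' ∘L inr 𝕜 E₁ E₂ := by
    ext; simp
  have hinl : (snd 𝕜 E₁ E₂ - F') ∘L inl 𝕜 E₁ E₂ = -(F' ∘L inl 𝕜 E₁ E₂) := by
    ext; simp
  rw [← hinr] at hinv
  set ψ := hΦ.implicitFunctionOfProdDomain hinv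
  have hψτ : ψ =ᶠ[𝓝 y₀] τ := by
    filter_upwards [hΦ.eventually_apply_implicitFunctionOfProdDomain hinv,
      (tendsto_id.prodMk_nhds (hΦ.tendsto_implicitFunctionOfProdDomain hinv)).eventually huniq]
      with y hψ hτ
    exact (hτ (sub_eq_zero.1 (hψ.trans (by rw [hfix, sub_self]))).symm).symm
  have := (hΦ.hasStrictFDerivAt_implicitFunctionOfProdDomain hinv).hasFDerivAt
    |>.congr_of_eventuallyEq hψτ.symm
  rwa [hinr, hinl, ContinuousLinearMap.comp_neg, neg_neg] at this

end ImplicitFixedPoint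

theorem heins_map_differential_formula_general (n m : ℕ)
    (D : Set (Fin n → ℂ)) (hDopen : IsOpen D) (hDconn : IsConnected D)
    (hDbdd : Bornology.IsBounded D)
    (Y : Set (Fin m → ℂ)) (hYopen : IsOpen Y)
    (F : (Fin m → ℂ) × (Fin n → ℂ) → (Fin n → ℂ))
    (hF : DifferentiableOn ℂ F (Y ×ˢ D))
    (hFcpt : ∀ y ∈ Y, IsCompact (closure ((fun z => F (y, z)) '' D)))
    (hFsub : ∀ y ∈ Y, closure ((fun z => F (y, z)) '' D) ⊆ D)
    (τ : (Fin m → ℂ) → (Fin n → ℂ))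
    (hτmem : ∀ y ∈ Y, τ y ∈ D) (hτfix : ∀ y ∈ Y, F (y, τ y) = τ y) :
    ∀ y₀ ∈ Y, DifferentiableAt ℂ τ y₀ ∧
      Function.Bijective
        (ContinuousLinearMap.id ℂ (Fin n → ℂ) -
          fderiv ℂ (fun z => F (y₀, z)) (τ y₀)) ∧
      ∀ v : Fin m → ℂ,
        (ContinuousLinearMap.id ℂ (Fin n → ℂ) -
            fderiv ℂ (fun z => F (y₀, z)) (τ y₀)) (fderiv ℂ τ y₀ v) =
          fderiv ℂ F (y₀, τ y₀) (v, 0) := by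
  intro y₀ hy₀
  have hFy : ∀ y ∈ Y, DifferentiableOn ℂ (fun z => F (y, z)) D := fun y hy =>
    hF.comp (differentiableOn_const y |>.prodMk differentiableOn_id) fun z hz => ⟨hy, hz⟩
  have hYD : IsOpen (Y ×ˢ D) := hYopen.prod hDopen
  have hstrict := hF.hasStrictFDerivAt hYD (x := (y₀, τ y₀)) ⟨hy₀, hτmem y₀ hy₀⟩
  have hslice : fderiv ℂ (fun z => F (y₀, z)) (τ y₀) =
      fderiv ℂ F (y₀, τ y₀) ∘L .inr ℂ (Fin m → ℂ) (Fin n → ℂ) :=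
    (hstrict.hasFDerivAt.comp (τ y₀) (hasFDerivAt_prodMk_right y₀ (τ y₀))).fderiv
  have hinv := isInvertible_id_sub_fderiv_of_isCompact_closure_image hDopen hDbdd (hFy y₀ hy₀)
    (hFcpt y₀ hy₀) (hFsub y₀ hy₀) (hτmem y₀ hy₀) (hτfix y₀ hy₀)
  have huniq : ∀ᶠ p in 𝓝 (y₀, τ y₀), F p = p.2 → τ p.1 = p.2 := by
    filter_upwards [hYD.mem_nhds ⟨hy₀, hτmem y₀ hy₀⟩] with p ⟨hpY, hpD⟩ hp
    exact eq_of_isFixedPt_of_isCompact_closure_image hDopen hDconn.isPreconnected hDbdd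
      (hFy p.1 hpY) (hFcpt p.1 hpY) (hFsub p.1 hpY) hpD (hτmem p.1 hpY) hp (hτfix p.1 hpY)
  rw [hslice] at hinv ⊢
  have hτ := hstrict.hasFDerivAt_of_eventually_isFixedPt (hτfix y₀ hy₀) hinv huniq
  refine ⟨hτ.differentiableAt, hinv.bijective, fun v => ?_⟩
  rw [hτ.fderiv]
  exact hinv.self_apply_inverse _

/-- Theorem 2.3, differential formula (bounded-domain case): for every `y₀ ∈ Y`,
`d(τ_F)_{y₀} = (id − d(f_{y₀})_{τ_F(y₀)})⁻¹ ∘ d_y F_{(y₀, τ_F(y₀))}`, expressed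
via the bijectivity of `id − d(f_{y₀})_{τ_F(y₀)}` together with
`(id − d(f_{y₀})_{τ_F(y₀)}) ∘ d(τ_F)_{y₀} = d_y F_{(y₀, τ_F(y₀))}`. -/
theorem heins_map_differential_formula (n m : ℕ)
    (D : Set (Fin n → ℂ)) (hDopen : IsOpen D) (hDconn : IsConnected D)
    (hDbdd : Bornology.IsBounded D)
    (Y : Set (Fin m → ℂ)) (hYopen : IsOpen Y) (hYne : Y.Nonempty)
    (F : (Fin m → ℂ) × (Fin n → ℂ) → (Fin n → ℂ))
    (hF : DifferentiableOn ℂ F (Y ×ˢ D))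
    (hFmaps : ∀ y ∈ Y, ∀ z ∈ D, F (y, z) ∈ D)
    (hFcpt : ∀ y ∈ Y, IsCompact (closure ((fun z => F (y, z)) '' D)))
    (hFsub : ∀ y ∈ Y, closure ((fun z => F (y, z)) '' D) ⊆ D)
    (τ : (Fin m → ℂ) → (Fin n → ℂ))
    (hτmem : ∀ y ∈ Y, τ y ∈ D) (hτfix : ∀ y ∈ Y, F (y, τ y) = τ y) :
    ∀ y₀ ∈ Y, DifferentiableAt ℂ τ y₀ ∧
      Function.Bijective
        (ContinuousLinearMap.id ℂ (Fin n → ℂ) -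
          fderiv ℂ (fun z => F (y₀, z)) (τ y₀)) ∧
      ∀ v : Fin m → ℂ,
        (ContinuousLinearMap.id ℂ (Fin n → ℂ) -
            fderiv ℂ (fun z => F (y₀, z)) (τ y₀)) (fderiv ℂ τ y₀ v) =
          fderiv ℂ F (y₀, τ y₀) (v, 0) :=
  heins_map_differential_formula_general n m D hDopen hDconn hDbdd Y hYopen F hF hFcpt hFsub τ hτmem
    hτfix
end

section
/- Let Δ be the open unit disc in ℂ. Let f_k, f : Δ → Δ be holomorphic maps whose images have compact closure contained in Δ, and suppose f_k → f uniformly on compact subsets of Δ. Then τ(f_k) → τ(f), where τ(g) denotes the unique fixed point of a holomorphic self-map g of Δ with relatively compact image. -/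
/-!
Conjugating by the involution `mobius a` of the disc, which swaps `a` and `0`, the Schwarz
lemma becomes the Schwarz–Pick inequality `‖mobius a (h b)‖ ≤ R * ‖mobius a b‖` at a fixed point
`a` of `h`, where `R` bounds `mobius a ∘ h`. Since `g` maps the disc into a disc of radius
`ρ < 1`, one may take `R < 1` for `g`, so `w` is its only fixed point. With `R = 1` and `b` the
point of modulus `t` on the ray through a fixed point `a` of `f k`, the inequality pushes `a`
inside the circle of radius `t` as soon as `‖f k‖ ≤ s` on that circle and
`(1 + s) (1 - t²) < 1 - s`; locally uniform convergence provides such `s` and `t` for all large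
`k`. The fixed points `z k` thus eventually lie in a compact subdisc, on which `g (z k) - z k`
tends to `0`, so their only possible cluster point is `w`.
-/

open Complex ComplexConjugate Function Metric Set Filter Topology

local notation "Δ" => Metric.ball (0 : ℂ) 1

theorem IsCompact.tendsto_of_tendsto_comp_of_unique {X Y ι : Type*} [TopologicalSpace X]
    [TopologicalSpace Y] [T2Space Y] {K : Set X} {φ : X → Y} {u : ι → X} {l : Filter ι} {w : X}
    {y : Y} (hK : IsCompact K) (hφ : ContinuousOn φ K) (huniq : ∀ x ∈ K, φ x = y → x = w)
    (hu : ∀ᶠ i in l, u i ∈ K) (hφu : Tendsto (φ ∘ u) l (𝓝 y)) : Tendsto u l (𝓝 w) := by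
  refine hK.tendsto_nhds_of_unique_mapClusterPt hu fun x hx hcl => huniq x hx ?_
  have hφcl : MapClusterPt (φ x) l (φ ∘ u) :=
    hcl.tendsto_comp' ((hφ x hx).tendsto.mono_left (inf_le_inf_left _ (le_principal_iff.mpr hu)))
  exact eq_of_nhds_neBot (hφcl.clusterPt.mono hφu)

theorem TendstoUniformlyOn.tendsto_sub_comp {ι α E : Type*} [SeminormedAddCommGroup E]
    {F : ι → α → E} {f : α → E} {l : Filter ι} {K : Set α} {u : ι → α}
    (h : TendstoUniformlyOn F f l K) (hu : ∀ᶠ i in l, u i ∈ K) :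
    Tendsto (fun i => f (u i) - F i (u i)) l (𝓝 0) :=
  Metric.tendsto_nhds.mpr fun ε hε => by
    filter_upwards [Metric.tendstoUniformlyOn_iff.mp h ε hε, hu] with i hi hui
    simpa [dist_eq_norm] using hi _ hui

theorem TendstoUniformlyOn.eventually_forall_norm_le {ι α E : Type*} [SeminormedAddCommGroup E]
    {F : ι → α → E} {f : α → E} {l : Filter ι} {K : Set α} {ρ s : ℝ}
    (h : TendstoUniformlyOn F f l K) (hf : ∀ x ∈ K, ‖f x‖ ≤ ρ) (hρs : ρ < s) :
    ∀ᶠ i in l, ∀ x ∈ K, ‖F i x‖ ≤ s := by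
  filter_upwards [Metric.tendstoUniformlyOn_iff.mp h (s - ρ) (sub_pos.mpr hρs)] with i hi x hx
  have := norm_le_norm_add_norm_sub' (F i x) (f x)
  rw [norm_sub_rev, ← dist_eq_norm] at this
  linarith [hi x hx, hf x hx]

section Mobius

noncomputable def mobius (a z : ℂ) : ℂ := (a - z) / (1 - conj a * z)

variable {a z : ℂ}

@[simp] lemma mobius_self (a : ℂ) : mobius a a = 0 := by simp [mobius]

@[simp] lemma mobius_zero (a : ℂ) : mobius a 0 = a := by simp [mobius]

lemma one_sub_conj_mul_ne_zero (ha : ‖a‖ < 1) (hz : ‖z‖ ≤ 1) : 1 - conj a * z ≠ 0 := by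
  refine sub_ne_zero.mpr (ne_of_apply_ne norm ?_)
  rw [norm_mul, norm_conj, norm_one]
  exact (mul_lt_one_of_nonneg_of_lt_one_left (norm_nonneg a) ha hz).ne'

lemma one_sub_norm_mobius_sq (ha : ‖a‖ < 1) (hz : ‖z‖ ≤ 1) :
    1 - ‖mobius a z‖ ^ 2 = (1 - ‖a‖ ^ 2) * (1 - ‖z‖ ^ 2) / ‖1 - conj a * z‖ ^ 2 := by
  have hd := one_sub_conj_mul_ne_zero ha hz
  rw [mobius, norm_div, div_pow, eq_div_iff (by positivity), sub_mul,
    div_mul_cancel₀ _ (by positivity)]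
  simp only [Complex.sq_norm, normSq_apply, sub_re, sub_im, mul_re, mul_im, conj_re, conj_im,
    one_re, one_im]
  ring

lemma norm_mobius_lt_one (ha : ‖a‖ < 1) (hz : ‖z‖ < 1) : ‖mobius a z‖ < 1 := by
  have h := one_sub_norm_mobius_sq ha hz.le
  have hpos : 0 < (1 - ‖a‖ ^ 2) * (1 - ‖z‖ ^ 2) / ‖1 - conj a * z‖ ^ 2 := by
    have := one_sub_conj_mul_ne_zero ha hz.le
    have : ‖a‖ ^ 2 < 1 := by nlinarith [norm_nonneg a]
    have : ‖z‖ ^ 2 < 1 := by nlinarith [norm_nonneg z]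
    apply div_pos <;> [nlinarith; positivity]
  nlinarith [norm_nonneg (mobius a z)]

lemma mapsTo_mobius (ha : a ∈ Δ) : MapsTo (mobius a) Δ Δ := fun _ hz =>
  mem_ball_zero_iff.mpr (norm_mobius_lt_one (mem_ball_zero_iff.mp ha) (mem_ball_zero_iff.mp hz))

lemma mobius_mobius (ha : ‖a‖ < 1) (hz : ‖z‖ < 1) : mobius a (mobius a z) = z := by
  have hz' := one_sub_conj_mul_ne_zero ha hz.le
  have hnum : a - mobius a z = z * (1 - conj a * a) / (1 - conj a * z) := by
    rw [mobius, eq_div_iff hz', sub_mul, div_mul_cancel₀ _ hz']; ring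
  have hden : 1 - conj a * mobius a z = (1 - conj a * a) / (1 - conj a * z) := by
    rw [mobius, eq_div_iff hz', sub_mul, mul_div_assoc', div_mul_cancel₀ _ hz']; ring
  rw [mobius, hnum, hden, div_div_div_cancel_right₀ hz',
    mul_div_cancel_right₀ _ (one_sub_conj_mul_ne_zero ha ha.le)]

lemma differentiableOn_mobius (ha : a ∈ Δ) : DifferentiableOn ℂ (mobius a) Δ :=
  DifferentiableOn.div (by fun_prop) (by fun_prop) fun _ hz =>
    one_sub_conj_mul_ne_zero (mem_ball_zero_iff.mp ha) (mem_ball_zero_iff.mp hz).le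

lemma one_sub_norm_le_norm_one_sub_conj_mul (ha : ‖a‖ ≤ 1) :
    1 - ‖z‖ ≤ ‖1 - conj a * z‖ := by
  have := norm_sub_norm_le (1 : ℂ) (conj a * z)
  rw [norm_one, norm_mul, norm_conj] at this
  nlinarith [norm_nonneg z]

lemma exists_norm_eq_conj_mul_eq (ha : a ≠ 0) {t : ℝ} (ht : 0 ≤ t) :
    ∃ b : ℂ, ‖b‖ = t ∧ conj a * b = ((t * ‖a‖ : ℝ) : ℂ) := by
  have ha0 : ‖a‖ ≠ 0 := norm_ne_zero_iff.mpr ha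
  refine ⟨((t / ‖a‖ : ℝ) : ℂ) * a, ?_, ?_⟩
  · rw [norm_mul, norm_real, Real.norm_of_nonneg (by positivity), div_mul_cancel₀ _ ha0]
  · rw [mul_left_comm, conj_mul']
    push_cast
    field_simp

end Mobius

section SchwarzPick

variable {h : ℂ → ℂ} {a b : ℂ}

theorem norm_mobius_apply_le_mul {R : ℝ} (hd : DifferentiableOn ℂ h Δ) (hmaps : MapsTo h Δ Δ)
    (ha : a ∈ Δ) (hfix : IsFixedPt h a) (hR : ∀ x ∈ Δ, ‖mobius a (h x)‖ ≤ R) (hb : b ∈ Δ) :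
    ‖mobius a (h b)‖ ≤ R * ‖mobius a b‖ := by
  set F := mobius a ∘ h ∘ mobius a
  have hF0 : F 0 = 0 := by simp [F, hfix.eq]
  have hFd : DifferentiableOn ℂ F Δ := (differentiableOn_mobius ha).comp
    (hd.comp (differentiableOn_mobius ha) (mapsTo_mobius ha)) (hmaps.comp (mapsTo_mobius ha))
  have hFmaps : MapsTo F Δ (closedBall (F 0) R) := fun ζ hζ => by
    rw [hF0, mem_closedBall_zero_iff]
    exact hR _ (mapsTo_mobius ha hζ)
  have hSchwarz := Complex.dist_le_div_mul_dist_of_mapsTo_ball hFd hFmaps (mapsTo_mobius ha hb)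
  rw [mem_ball_zero_iff] at ha hb
  simpa [F, hfix.eq, mobius_mobius ha hb] using hSchwarz

theorem one_sub_sq_div_le_of_isFixedPt (hd : DifferentiableOn ℂ h Δ) (hmaps : MapsTo h Δ Δ)
    (ha : a ∈ Δ) (hfix : IsFixedPt h a) (hb : b ∈ Δ) :
    (1 - ‖b‖ ^ 2) / ‖1 - conj a * b‖ ^ 2 ≤ (1 - ‖h b‖ ^ 2) / ‖1 - conj a * h b‖ ^ 2 := by
  have ha1 := mem_ball_zero_iff.mp ha
  have hpick : ‖mobius a (h b)‖ ≤ ‖mobius a b‖ := by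
    simpa using norm_mobius_apply_le_mul hd hmaps ha hfix
      (fun y hy => (norm_mobius_lt_one ha1 (mem_ball_zero_iff.mp (hmaps hy))).le) hb
  have hsq : 1 - ‖mobius a b‖ ^ 2 ≤ 1 - ‖mobius a (h b)‖ ^ 2 := by
    nlinarith [norm_nonneg (mobius a (h b))]
  rw [one_sub_norm_mobius_sq ha1 (mem_ball_zero_iff.mp hb).le,
    one_sub_norm_mobius_sq ha1 (mem_ball_zero_iff.mp (hmaps hb)).le, mul_div_assoc,
    mul_div_assoc] at hsq
  exact le_of_mul_le_mul_left hsq (by nlinarith [norm_nonneg a])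

theorem norm_lt_of_isFixedPt {s t : ℝ} (hd : DifferentiableOn ℂ h Δ) (hmaps : MapsTo h Δ Δ)
    (ha : a ∈ Δ) (hfix : IsFixedPt h a) (ht : 0 < t) (hs : ∀ b, ‖b‖ = t → ‖h b‖ ≤ s)
    (hst : (1 + s) * (1 - t ^ 2) < 1 - s) : ‖a‖ < t := by
  by_contra! hta
  have ha1 := mem_ball_zero_iff.mp ha
  obtain ⟨b, hbt, hab⟩ := exists_norm_eq_conj_mul_eq (norm_pos_iff.mp (ht.trans_le hta)) ht.le
  have hb : b ∈ Δ := mem_ball_zero_iff.mpr (hbt ▸ hta.trans_lt ha1)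
  have key := one_sub_sq_div_le_of_isFixedPt hd hmaps ha hfix hb
  set x := h b
  have hx1 : 0 < 1 - ‖x‖ := sub_pos.mpr (mem_ball_zero_iff.mp (hmaps hb))
  have hxs : ‖x‖ ≤ s := hs b hbt
  have htt : 0 < 1 - t ^ 2 := by nlinarith
  have hta1 : 0 < 1 - t * ‖a‖ := by nlinarith
  have hs1 : s < 1 := by nlinarith [norm_nonneg x]
  rw [hab, ← ofReal_one, ← ofReal_sub, norm_real, Real.norm_of_nonneg hta1.le, hbt] at key
  have hchain : 1 / (1 - t ^ 2) ≤ (1 + s) / (1 - s) :=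
    calc 1 / (1 - t ^ 2) = (1 - t ^ 2) / (1 - t ^ 2) ^ 2 := by field_simp
      _ ≤ (1 - t ^ 2) / (1 - t * ‖a‖) ^ 2 :=
        div_le_div_of_nonneg_left htt.le (by positivity) (by gcongr; nlinarith)
      _ ≤ (1 - ‖x‖ ^ 2) / ‖1 - conj a * x‖ ^ 2 := key
      _ ≤ (1 - ‖x‖ ^ 2) / (1 - ‖x‖) ^ 2 := by
        gcongr
        · nlinarith [norm_nonneg x]
        · exact one_sub_norm_le_norm_one_sub_conj_mul ha1.le
      _ = (1 + ‖x‖) / (1 - ‖x‖) := by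
        rw [div_eq_div_iff (by positivity) hx1.ne']; ring
      _ ≤ (1 + s) / (1 - s) :=
        div_le_div₀ (by linarith [norm_nonneg x]) (by linarith) (by linarith) (by linarith)
  rw [div_le_div_iff₀ htt (by linarith)] at hchain
  linarith

theorem eq_of_isFixedPt {ρ : ℝ} (hd : DifferentiableOn ℂ h Δ) (hρ : ρ < 1)
    (hmaps : MapsTo h Δ (closedBall 0 ρ)) (ha : a ∈ Δ) (hb : b ∈ Δ) (hfa : IsFixedPt h a)
    (hfb : IsFixedPt h b) : a = b := by
  have hsub : closedBall (0 : ℂ) ρ ⊆ Δ := closedBall_subset_ball hρ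
  obtain ⟨R, hR1, hR⟩ : ∃ R < 1, mobius a '' closedBall 0 ρ ⊆ ball 0 R :=
    exists_lt_subset_ball ((isCompact_closedBall 0 ρ).image_of_continuousOn
      ((differentiableOn_mobius ha).continuousOn.mono hsub)).isClosed
      ((mapsTo_mobius ha).mono_left hsub).image_subset
  have hcontr := norm_mobius_apply_le_mul hd (hmaps.mono_right hsub) ha hfa
    (fun x hx => (mem_ball_zero_iff.mp (hR (mem_image_of_mem _ (hmaps hx)))).le) hb
  rw [hfb.eq] at hcontr
  have hzero : mobius a b = 0 := norm_eq_zero.mp (by nlinarith [norm_nonneg (mobius a b)])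
  calc a = mobius a (mobius a b) := by rw [hzero, mobius_zero]
    _ = b := mobius_mobius (mem_ball_zero_iff.mp ha) (mem_ball_zero_iff.mp hb)

end SchwarzPick

theorem heins_map_continuous_unit_disc_general
    (f : ℕ → ℂ → ℂ) (g : ℂ → ℂ)
    (hf : ∀ k, DifferentiableOn ℂ (f k) (Metric.ball (0 : ℂ) 1))
    (hfmaps : ∀ k, Set.MapsTo (f k) (Metric.ball (0 : ℂ) 1)
      (Metric.ball (0 : ℂ) 1))
    (hg : DifferentiableOn ℂ g (Metric.ball (0 : ℂ) 1))
    (hgsub : closure (g '' Metric.ball (0 : ℂ) 1) ⊆ Metric.ball (0 : ℂ) 1)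
    (hconv : TendstoLocallyUniformlyOn (fun k => f k) g Filter.atTop
      (Metric.ball (0 : ℂ) 1))
    (z : ℕ → ℂ) (hz : ∀ k, z k ∈ Metric.ball (0 : ℂ) 1)
    (hzfix : ∀ k, f k (z k) = z k)
    (w : ℂ) (hw : w ∈ Metric.ball (0 : ℂ) 1) (hwfix : g w = w) :
    Filter.Tendsto z Filter.atTop (nhds w) := by
  obtain ⟨ρ, hρ1, hgρ⟩ := exists_lt_subset_ball isClosed_closure hgsub
  have hgρ' : MapsTo g Δ (ball 0 ρ) := fun x hx => hgρ (subset_closure (mem_image_of_mem g hx))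
  have hρ0 : 0 < ρ := (norm_nonneg w).trans_lt (mem_ball_zero_iff.mp (hwfix ▸ hgρ' hw))
  obtain ⟨s, hρs, hs1⟩ := exists_between hρ1
  obtain ⟨t, ht0, ht1, hst⟩ : ∃ t, 0 < t ∧ t < 1 ∧ (1 + s) * (1 - t ^ 2) < 1 - s :=
    ⟨(3 + s) / 4, by linarith, by linarith, by
      nlinarith [mul_pos (mul_pos (sub_pos.2 hs1) (sub_pos.2 hs1)) (by linarith : (0 : ℝ) < 9 + s)]⟩
  have hK : closedBall (0 : ℂ) t ⊆ Δ := closedBall_subset_ball ht1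
  have huc : TendstoUniformlyOn f g atTop (closedBall 0 t) :=
    (tendstoLocallyUniformlyOn_iff_tendstoUniformlyOn_of_compact (isCompact_closedBall 0 t)).mp
      (hconv.mono hK)
  have hfs : ∀ᶠ k in atTop, ∀ b ∈ closedBall (0 : ℂ) t, ‖f k b‖ ≤ s :=
    huc.eventually_forall_norm_le (fun b hb => (mem_ball_zero_iff.mp (hgρ' (hK hb))).le) hρs
  have hzK : ∀ᶠ k in atTop, z k ∈ closedBall (0 : ℂ) t := hfs.mono fun k hk =>
    mem_closedBall_zero_iff.mpr (norm_lt_of_isFixedPt (hf k) (hfmaps k) (hz k) (hzfix k)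
      ht0 (fun b hb => hk b (mem_closedBall_zero_iff.mpr hb.le)) hst).le
  refine (isCompact_closedBall 0 t).tendsto_of_tendsto_comp_of_unique (φ := fun x => g x - x)
    (y := 0) ((hg.mono hK).continuousOn.sub continuousOn_id) (fun x hx hx0 => ?_) hzK ?_
  · exact eq_of_isFixedPt hg hρ1 (hgρ'.mono_right ball_subset_closedBall) (hK hx) hw
      (sub_eq_zero.mp hx0) hwfix
  · simpa [Function.comp_def, hzfix] using huc.tendsto_sub_comp hzK

/-- Lemma 2.1 in the one-dimensional case: if holomorphic self-maps `f_k` of the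
unit disc `Δ` with relatively compact images converge locally uniformly on `Δ`
to `f` (also with relatively compact image), then their unique fixed points
`τ(f_k)` converge to the unique fixed point `τ(f)`. -/
theorem heins_map_continuous_unit_disc
    (f : ℕ → ℂ → ℂ) (g : ℂ → ℂ)
    (hf : ∀ k, DifferentiableOn ℂ (f k) (Metric.ball (0 : ℂ) 1))
    (hfmaps : ∀ k, Set.MapsTo (f k) (Metric.ball (0 : ℂ) 1)
      (Metric.ball (0 : ℂ) 1))
    (hfcpt : ∀ k, IsCompact (closure (f k '' Metric.ball (0 : ℂ) 1)))
    (hfsub : ∀ k, closure (f k '' Metric.ball (0 : ℂ) 1) ⊆ Metric.ball (0 : ℂ) 1)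
    (hg : DifferentiableOn ℂ g (Metric.ball (0 : ℂ) 1))
    (hgmaps : Set.MapsTo g (Metric.ball (0 : ℂ) 1) (Metric.ball (0 : ℂ) 1))
    (hgcpt : IsCompact (closure (g '' Metric.ball (0 : ℂ) 1)))
    (hgsub : closure (g '' Metric.ball (0 : ℂ) 1) ⊆ Metric.ball (0 : ℂ) 1)
    (hconv : TendstoLocallyUniformlyOn (fun k => f k) g Filter.atTop
      (Metric.ball (0 : ℂ) 1))
    (z : ℕ → ℂ) (hz : ∀ k, z k ∈ Metric.ball (0 : ℂ) 1)
    (hzfix : ∀ k, f k (z k) = z k)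
    (w : ℂ) (hw : w ∈ Metric.ball (0 : ℂ) 1) (hwfix : g w = w) :
    Filter.Tendsto z Filter.atTop (nhds w) :=
  heins_map_continuous_unit_disc_general f g hf hfmaps hg hgsub hconv z hz hzfix w hw hwfix
end
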